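/- arXiv:math/0609490 — 3 statements merged into one kernel-verified Lean document; each statement's English description precedes it below -/
import Mathlib

section
/- Let n ≥ 2 be even. Then p_n(Z) - 2 = q_1(Z) · q_2(Z) · ∏_{d | n, d ∉ {1,2}} q_d(Z)², where p_n is the trace polynomial family, q_1(Z) = Z - 2, q_2(Z) = Z + 2, and q_d for d ≥ 3 is determined by g_d(X) = X^{φ(d)/2} q_d(X + 1/X). -/
open Polynomial

noncomputable def tracePoly : ℕ → Polynomial ℂ
  | 0 => 1
  | 1 => X
  | 2 => X ^ 2 - 2
  | (n + 3) => X * tracePoly (n + 2) - tracePoly (n + 1)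

/-! Write `z = x + x⁻¹` with `x ≠ 0`. Then `p_n` is the Dickson polynomial `D_n(·, 1)`, so
`p_n(z) - 2 = (x ^ n - 1) ^ 2 / x ^ n`. For even `n`, `x ^ n - 1 = (x ^ 2 - 1) ∏ g_d(x)` over the
divisors `d ∉ {1, 2}`; squaring `g_d(x) = x ^ (φ(d) / 2) q_d(z)` and using `∑ φ(d) = n - 2` gives
`(x ^ n - 1) ^ 2 = (x ^ 2 - 1) ^ 2 x ^ (n - 2) ∏ q_d(z) ^ 2`, while
`(x ^ 2 - 1) ^ 2 / x ^ 2 = (z - 2)(z + 2)`. Every `z ∈ ℂ` has this form, so the polynomials agree. -/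

theorem tracePoly_eq_dickson : ∀ {n : ℕ}, n ≠ 0 → tracePoly n = dickson 1 (1 : ℂ) n
  | 1, _ => rfl
  | 2, _ => by simp [tracePoly, sq]; norm_num
  | n + 3, _ => by
    rw [tracePoly, tracePoly_eq_dickson (n + 1).succ_ne_zero, tracePoly_eq_dickson n.succ_ne_zero,
      dickson_add_two _ _ (n + 1), C_1, one_mul]

theorem tracePoly_eval_add_inv {n : ℕ} (hn : n ≠ 0) {x : ℂ} (hx : x ≠ 0) :
    (tracePoly n).eval (x + x⁻¹) = x ^ n + x⁻¹ ^ n := by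
  rw [tracePoly_eq_dickson hn, dickson_one_one_eval_add_inv x x⁻¹ (mul_inv_cancel₀ hx)]

theorem IsAlgClosed.exists_add_inv_eq {K : Type*} [Field K] [IsAlgClosed K] (z : K) :
    ∃ x : K, x ≠ 0 ∧ x + x⁻¹ = z := by
  obtain ⟨x, hx⟩ := IsAlgClosed.exists_root (X ^ 2 - C z * X + 1) (by
    rw [show (X ^ 2 - C z * X + 1 : K[X]) = C 1 * X ^ 2 + C (-z) * X + C 1 by simp; ring,
      degree_quadratic one_ne_zero]
    norm_num)
  simp only [IsRoot, eval_add, eval_sub, eval_mul, eval_pow, eval_X, eval_C, eval_one] at hx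
  have hx0 : x ≠ 0 := by rintro rfl; simp at hx
  refine ⟨x, hx0, ?_⟩
  field_simp
  linear_combination hx

theorem Nat.insert_one_two_subset_divisors {n : ℕ} (hn : n ≠ 0) (h2 : 2 ∣ n) :
    ({1, 2} : Finset ℕ) ⊆ n.divisors := by
  simp [Finset.insert_subset_iff, hn, h2]

theorem Nat.three_le_of_mem_divisors_sdiff {n d : ℕ} (hd : d ∈ n.divisors \ {1, 2}) : 3 ≤ d := by
  simp only [Finset.mem_sdiff, Nat.mem_divisors, Finset.mem_insert, Finset.mem_singleton] at hd
  have := Nat.pos_of_dvd_of_pos hd.1.1 (Nat.pos_of_ne_zero hd.1.2)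
  omega

theorem Nat.sum_totient_divisors_sdiff_one_two {n : ℕ} (hn : n ≠ 0) (h2 : 2 ∣ n) :
    ∑ d ∈ n.divisors \ {1, 2}, d.totient = n - 2 := by
  have h := Finset.sum_sdiff (f := Nat.totient) (Nat.insert_one_two_subset_divisors hn h2)
  rw [Nat.sum_totient, Finset.sum_pair (by decide : (1 : ℕ) ≠ 2), Nat.totient_one,
    Nat.totient_two] at h
  omega

theorem Polynomial.X_sq_sub_one_mul_prod_cyclotomic (R : Type*) [CommRing R] {n : ℕ}
    (hn : n ≠ 0) (h2 : 2 ∣ n) :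
    (X ^ 2 - 1) * ∏ d ∈ n.divisors \ {1, 2}, cyclotomic d R = X ^ n - 1 := by
  rw [← prod_cyclotomic_eq_X_pow_sub_one (Nat.pos_of_ne_zero hn),
    ← Finset.prod_sdiff (Nat.insert_one_two_subset_divisors hn h2),
    Finset.prod_pair (by decide : (1 : ℕ) ≠ 2), cyclotomic_one, cyclotomic_two]
  ring

theorem stmt10 (q : ℕ → Polynomial ℂ) (hq1 : q 1 = X - 2) (hq2 : q 2 = X + 2)
    (hq : ∀ d : ℕ, 3 ≤ d → ∀ x : ℂ, x ≠ 0 →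
      (Polynomial.cyclotomic d ℂ).eval x = x ^ (Nat.totient d / 2) * (q d).eval (x + x⁻¹))
    (n : ℕ) (hn : 2 ≤ n) (heven : Even n) :
    tracePoly n - 2 = q 1 * q 2 * ∏ d ∈ n.divisors \ {1, 2}, (q d) ^ 2 := by
  have hn0 : n ≠ 0 := by omega
  refine Polynomial.funext fun z => ?_
  obtain ⟨x, hx, rfl⟩ := IsAlgClosed.exists_add_inv_eq z
  set S := n.divisors \ {1, 2}
  set P := ∏ d ∈ S, (q d).eval (x + x⁻¹) ^ 2
  have hcyc : (∏ d ∈ S, (cyclotomic d ℂ).eval x) ^ 2 = x ^ (n - 2) * P := by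
    rw [← Nat.sum_totient_divisors_sdiff_one_two hn0 heven.two_dvd, ← Finset.prod_pow,
      ← Finset.prod_pow_eq_pow_sum, ← Finset.prod_mul_distrib]
    refine Finset.prod_congr rfl fun d hd => ?_
    have hd3 := Nat.three_le_of_mem_divisors_sdiff hd
    rw [hq d hd3 x hx, mul_pow, ← pow_mul,
      Nat.div_mul_cancel (Nat.totient_even (by omega)).two_dvd]
  have hroot := congrArg (eval x) (X_sq_sub_one_mul_prod_cyclotomic ℂ hn0 heven.two_dvd)
  simp only [eval_mul, eval_sub, eval_pow, eval_X, eval_one, eval_prod] at hroot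
  have hxn : x ^ n = x ^ (n - 2) * x ^ 2 := by rw [← pow_add, Nat.sub_add_cancel hn]
  calc (tracePoly n - 2).eval (x + x⁻¹) = (x ^ n - 1) ^ 2 / x ^ n := by
        rw [eval_sub, tracePoly_eval_add_inv hn0 hx, eval_ofNat, inv_pow]
        field_simp
        ring
    _ = (x ^ 2 - 1) ^ 2 * (x ^ (n - 2) * P) / x ^ n := by rw [← hroot, mul_pow, hcyc]
    _ = (x + x⁻¹ - 2) * (x + x⁻¹ + 2) * P := by
        rw [hxn]
        field_simp
        ring
    _ = (q 1 * q 2 * ∏ d ∈ S, q d ^ 2).eval (x + x⁻¹) := by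
        simp [hq1, hq2, eval_prod, P]
end

section
/- For r ≥ 3, the roots of q_r in ℂ are exactly the φ(r)/2 distinct numbers 2·cos(2πk/r) for k coprime to r with 1 ≤ k < r/2, where q_r is defined by g_r(X) = X^{φ(r)/2} q_r(X + 1/X). -/
/-! Every `z ∈ ℂ` is `w + w⁻¹` for some `w ≠ 0`, so evaluating `g_r(w) = w^{φ(r)/2} q_r(w + w⁻¹)`
shows that the roots of `q_r` are exactly the numbers `w + w⁻¹` with `w` a primitive `r`-th root of
unity. For `w = exp(2πik/r)` this is `2 cos(2πk/r)`, which is unchanged under `k ↦ r - k`; so one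
may take `2k < r`, where the cosine is injective, and the same involution halves the `φ(r)` residues
coprime to `r`. -/

open Polynomial Real Finset

theorem Nat.Coprime.two_mul_ne {k r : ℕ} (h : k.Coprime r) (hr : r ≠ 2) : 2 * k ≠ r := by
  rintro rfl
  have : k = 1 := h.eq_one_of_dvd (Dvd.intro_left 2 rfl)
  omega

theorem Nat.Coprime.pos_of_ne_one {k r : ℕ} (h : k.Coprime r) (hr : r ≠ 1) : 0 < k := by
  rcases Nat.eq_zero_or_pos k with rfl | hk
  · exact absurd (Nat.coprime_zero_left r |>.mp h) hr
  · exact hk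

theorem card_filter_coprime_two_mul_lt {r : ℕ} (hr : 2 < r) :
    #{k ∈ Ico 1 r | k.Coprime r ∧ 2 * k < r} = r.totient / 2 := by
  set A := {k ∈ Ico 1 r | k.Coprime r ∧ 2 * k < r}
  set B := {k ∈ Ico 1 r | k.Coprime r ∧ r < 2 * k}
  have hsplit : {k ∈ range r | r.Coprime k} = A ∪ B := by
    ext k
    simp only [A, B, mem_union, mem_filter, mem_range, mem_Ico]
    constructor
    · rintro ⟨hkr, hrk⟩
      have hk := hrk.symm
      have hk1 := hk.pos_of_ne_one (by omega)
      rcases (hk.two_mul_ne (by omega)).lt_or_gt with hlt | hgt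
      · exact .inl ⟨⟨hk1, hkr⟩, hk, hlt⟩
      · exact .inr ⟨⟨hk1, hkr⟩, hk, hgt⟩
    · rintro (⟨⟨-, hkr⟩, hk, -⟩ | ⟨⟨-, hkr⟩, hk, -⟩) <;> exact ⟨hkr, hk.symm⟩
  have hdisj : Disjoint A B := disjoint_filter.mpr fun k _ hA hB => by omega
  have hreflect : #B = #A := by
    refine card_nbij' (r - ·) (r - ·) ?_ ?_ ?_ ?_ <;>
      intro k hk <;> simp only [A, B, coe_filter, Set.mem_ofPred_eq, mem_Ico] at hk ⊢
    · exact ⟨by omega, (Nat.coprime_self_sub_left (by omega)).mpr hk.2.1, by omega⟩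
    · exact ⟨by omega, (Nat.coprime_self_sub_left (by omega)).mpr hk.2.1, by omega⟩
    · omega
    · omega
  have htot : r.totient = #A + #B := by
    rw [Nat.totient_eq_card_coprime, hsplit, card_union_of_disjoint hdisj]
  omega

theorem Complex.exp_two_pi_mul_I_div_add_inv (k r : ℕ) :
    Complex.exp (2 * π * Complex.I * (k / r)) + (Complex.exp (2 * π * Complex.I * (k / r)))⁻¹ =
      ((2 * Real.cos (2 * π * k / r) : ℝ) : ℂ) := by
  rw [← Complex.exp_neg]
  push_cast
  rw [Complex.two_cos]
  ring_nf

theorem Real.cos_two_pi_mul_sub_div {r : ℝ} (hr : r ≠ 0) (x : ℝ) :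
    Real.cos (2 * π * (r - x) / r) = Real.cos (2 * π * x / r) := by
  rw [show 2 * π * (r - x) / r = 2 * π - 2 * π * x / r by field_simp, Real.cos_two_pi_sub]

theorem injOn_two_cos_two_pi_mul_div (r : ℕ) :
    Set.InjOn (fun k : ℕ => ((2 * Real.cos (2 * π * k / r) : ℝ) : ℂ)) {k | 2 * k ≤ r} := by
  intro a (ha : 2 * a ≤ r) b (hb : 2 * b ≤ r) hab
  have hcos : Real.cos (2 * π * a / r) = Real.cos (2 * π * b / r) := by
    have := Complex.ofReal_inj.mp hab
    linarith
  have hIcc : ∀ k : ℕ, 2 * k ≤ r → 2 * π * k / r ∈ Set.Icc 0 π := by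
    intro k hk
    refine ⟨by positivity, div_le_of_le_mul₀ (by positivity) pi_pos.le ?_⟩
    have : (2 * k : ℝ) ≤ r := mod_cast hk
    nlinarith [pi_pos]
  rcases Nat.eq_zero_or_pos r with rfl | hr
  · omega
  have := Real.injOn_cos (hIcc a ha) (hIcc b hb) hcos
  field_simp at this
  exact_mod_cast this

theorem Complex.exists_ne_zero_add_inv_eq (z : ℂ) : ∃ w : ℂ, w ≠ 0 ∧ w + w⁻¹ = z := by
  have hdeg : 0 < degree ((X : ℂ[X]) ^ 2 - C z * X + 1) := by
    rw [show degree ((X : ℂ[X]) ^ 2 - C z * X + 1) = 2 by compute_degree!]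
    norm_num
  obtain ⟨w, hw⟩ := Complex.exists_root hdeg
  have hquad : w ^ 2 - z * w + 1 = 0 := by simpa [IsRoot] using hw
  have hw0 : w ≠ 0 := by
    rintro rfl
    simp at hquad
  refine ⟨w, hw0, ?_⟩
  field_simp
  linear_combination hquad

section CyclotomicPalindrome

variable {q : ℂ[X]} {n m : ℕ}
  (h : ∀ x : ℂ, x ≠ 0 → (cyclotomic n ℂ).eval x = x ^ m * q.eval (x + x⁻¹))
include h

theorem isRoot_iff_exists_isPrimitiveRoot_add_inv_eq (hn : 0 < n) (z : ℂ) :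
    q.IsRoot z ↔ ∃ w : ℂ, IsPrimitiveRoot w n ∧ w + w⁻¹ = z := by
  constructor
  · intro hz
    obtain ⟨w, hw0, rfl⟩ := Complex.exists_ne_zero_add_inv_eq z
    refine ⟨w, (isRoot_cyclotomic_iff_charZero hn).mp ?_, rfl⟩
    rw [IsRoot, h w hw0, hz.eq_zero, mul_zero]
  · rintro ⟨w, hw, rfl⟩
    have hw0 : w ≠ 0 := hw.ne_zero hn.ne'
    have hroot := (isRoot_cyclotomic_iff_charZero hn).mpr hw
    rw [IsRoot, h w hw0] at hroot
    exact (mul_eq_zero.mp hroot).resolve_left (pow_ne_zero _ hw0)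

theorem ne_zero_of_cyclotomic_eval_eq (hn : 0 < n) : q ≠ 0 := by
  rintro rfl
  have h2 : (cyclotomic n ℂ).IsRoot 2 := by
    rw [IsRoot, h 2 two_ne_zero, eval_zero, mul_zero]
  have := ((isRoot_cyclotomic_iff_charZero hn).mp h2).norm'_eq_one hn.ne'
  norm_num at this

end CyclotomicPalindrome

theorem exists_isPrimitiveRoot_add_inv_eq_iff {r : ℕ} (hr : 2 < r) (z : ℂ) :
    (∃ w : ℂ, IsPrimitiveRoot w r ∧ w + w⁻¹ = z) ↔
      ∃ k : ℕ, k.Coprime r ∧ 1 ≤ k ∧ 2 * k < r ∧ z = ((2 * Real.cos (2 * π * k / r) : ℝ) : ℂ) := by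
  have hr0 : r ≠ 0 := by omega
  constructor
  · rintro ⟨w, hw, rfl⟩
    obtain ⟨i, hir, hi, rfl⟩ := (Complex.isPrimitiveRoot_iff w r hr0).mp hw
    rw [Complex.exp_two_pi_mul_I_div_add_inv]
    have hi0 := hi.pos_of_ne_one (by omega)
    rcases (hi.two_mul_ne (by omega)).lt_or_gt with hlt | hgt
    · exact ⟨i, hi, hi0, hlt, rfl⟩
    · refine ⟨r - i, (Nat.coprime_self_sub_left hir.le).mpr hi, by omega, by omega, ?_⟩
      rw [Nat.cast_sub hir.le, Real.cos_two_pi_mul_sub_div (by positivity)]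
  · rintro ⟨k, hk, -, -, rfl⟩
    exact ⟨_, Complex.isPrimitiveRoot_exp_of_coprime k r hr0 hk,
      Complex.exp_two_pi_mul_I_div_add_inv k r⟩

theorem stmt17_general (q : ℕ → Polynomial ℂ)
    (hq : ∀ d : ℕ, 3 ≤ d → ∀ x : ℂ, x ≠ 0 →
      (Polynomial.cyclotomic d ℂ).eval x = x ^ (Nat.totient d / 2) * (q d).eval (x + x⁻¹))
    (r : ℕ) (hr : 3 ≤ r) :
    (∀ z : ℂ, (q r).IsRoot z ↔
        ∃ k : ℕ, Nat.Coprime k r ∧ 1 ≤ k ∧ 2 * k < r ∧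
          z = (2 * Real.cos (2 * π * k / r) : ℝ)) ∧
      (q r).roots.toFinset.card = r.totient / 2 := by
  have hroots := fun z =>
    (isRoot_iff_exists_isPrimitiveRoot_add_inv_eq (hq r hr) (by omega) z).trans
      (exists_isPrimitiveRoot_add_inv_eq_iff hr z)
  refine ⟨hroots, ?_⟩
  have hq0 : q r ≠ 0 := ne_zero_of_cyclotomic_eval_eq (hq r hr) (by omega)
  have himage : (q r).roots.toFinset = {k ∈ Ico 1 r | k.Coprime r ∧ 2 * k < r}.image
      fun k : ℕ => ((2 * Real.cos (2 * π * k / r) : ℝ) : ℂ) := by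
    ext z
    simp only [Multiset.mem_toFinset, mem_roots hq0, hroots, mem_image, mem_filter, mem_Ico]
    constructor
    · rintro ⟨k, hk, h1, h2, rfl⟩
      exact ⟨k, ⟨⟨h1, by omega⟩, hk, h2⟩, rfl⟩
    · rintro ⟨k, ⟨⟨h1, -⟩, hk, h2⟩, rfl⟩
      exact ⟨k, hk, h1, h2, rfl⟩
  rw [himage, card_image_of_injOn, card_filter_coprime_two_mul_lt hr]
  exact (injOn_two_cos_two_pi_mul_div r).mono fun k hk => (mem_filter.mp hk).2.2.le

theorem stmt17 (q : ℕ → Polynomial ℂ) (hq1 : q 1 = X - 2) (hq2 : q 2 = X + 2)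
    (hq : ∀ d : ℕ, 3 ≤ d → ∀ x : ℂ, x ≠ 0 →
      (Polynomial.cyclotomic d ℂ).eval x = x ^ (Nat.totient d / 2) * (q d).eval (x + x⁻¹))
    (r : ℕ) (hr : 3 ≤ r) :
    (∀ z : ℂ, (q r).IsRoot z ↔
        ∃ k : ℕ, Nat.Coprime k r ∧ 1 ≤ k ∧ 2 * k < r ∧
          z = (2 * Real.cos (2 * π * k / r) : ℝ)) ∧
      (q r).roots.toFinset.card = r.totient / 2 :=
  stmt17_general q hq r hr
end

section
/- Define f_s(X,Z) = p_s(Z)·(X² - Z - 1) + Σ_{i=1}^{s} (-1)ⁱ p_{s-i}(Z)·α_i(X,Z), where α_i(X,Z) = X² - Z if i is even and X² - 2 if i is odd, and p_n is the trace polynomial family. Then f_s(X,Z) = (X² - Z - 2) · Σ_{i=0}^{s} (-1)ⁱ p_{s-i}(Z), and hence f_s(X,Z) = (X² - Z - 2) · ∏_{d | 2s+1, d ≠ 1} q_d*(Z). -/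
open Polynomial

/-- The involution `g* (T) = (-1)^(deg g) * g (-T)`. -/
noncomputable def starPoly (g : Polynomial ℂ) : Polynomial ℂ :=
  (-1 : Polynomial ℂ) ^ g.natDegree * g.comp (-X)

/-- The variable `Z`, viewed in the two-variable ring `ℂ[Z][X]`. -/
noncomputable def Zvar : Polynomial (Polynomial ℂ) := C X

/-- `α_i(X, Z) = X² - Z` if `i` is even, `X² - 2` if `i` is odd. -/
noncomputable def alphaPoly (i : ℕ) : Polynomial (Polynomial ℂ) :=
  if Even i then X ^ 2 - Zvar else X ^ 2 - 2

/-- `f_s(X,Z) = p_s(Z)(X² - Z - 1) + Σ_{i=1}^{s} (-1)^i p_{s-i}(Z) α_i(X,Z)`. -/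
noncomputable def fPoly (s : ℕ) : Polynomial (Polynomial ℂ) :=
  C (tracePoly s) * (X ^ 2 - Zvar - 1) +
    ∑ i ∈ Finset.Icc 1 s, (-1 : Polynomial (Polynomial ℂ)) ^ i * C (tracePoly (s - i)) * alphaPoly i

/- ### Auxiliary definitions and lemmas -/

lemma tp_rec (n : ℕ) : tracePoly (n + 3) = X * tracePoly (n + 2) - tracePoly (n + 1) := rfl

lemma tp_zero : tracePoly 0 = 1 := rfl
lemma tp_one : tracePoly 1 = X := rfl
lemma tp_two : tracePoly 2 = X ^ 2 - 2 := rfl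

lemma sum_Icc_one {M : Type*} [AddCommMonoid M] (g : ℕ → M) (s : ℕ) :
    ∑ i ∈ Finset.Icc 1 s, g i = ∑ i ∈ Finset.range s, g (i + 1) := by
  rw [← Finset.Ico_add_one_right_eq_Icc, Finset.sum_Ico_eq_sum_range]
  exact Finset.sum_congr (by norm_num) fun i _ => by rw [Nat.add_comm]

/-- monicity and degree of the trace polynomials -/
lemma tp_monic : ∀ n, (tracePoly n).Monic ∧ (tracePoly n).natDegree = n := by
  have key : ∀ n, ((tracePoly n).Monic ∧ (tracePoly n).natDegree = n) ∧
      ((tracePoly (n + 1)).Monic ∧ (tracePoly (n + 1)).natDegree = n + 1) := by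
    intro n
    induction n with
    | zero => exact ⟨⟨monic_one, natDegree_one⟩, monic_X, natDegree_X⟩
    | succ m ih =>
      refine ⟨ih.2, ?_⟩
      match m, ih with
      | 0, _ =>
        have h2 : tracePoly 2 = X ^ 2 - C 2 := by
          rw [tp_two, show (C 2 : Polynomial ℂ) = 2 from map_ofNat C 2]
        constructor
        · rw [h2]; exact monic_X_pow_sub_C 2 two_ne_zero
        · rw [h2]; exact natDegree_X_pow_sub_C
      | (k + 1), ih =>
        have hm : (X * tracePoly (k + 2)).Monic := monic_X.mul ih.2.1
        have hdeg : (X * tracePoly (k + 2)).natDegree = k + 3 := by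
          rw [monic_X.natDegree_mul ih.2.1, natDegree_X, ih.2.2]; omega
        have hlt : (tracePoly (k + 1)).natDegree < (X * tracePoly (k + 2)).natDegree := by
          rw [hdeg, ih.1.2]; omega
        constructor
        · rw [tp_rec]
          exact hm.sub_of_left (degree_lt_degree hlt)
        · rw [tp_rec, natDegree_sub_eq_left_of_natDegree_lt hlt, hdeg]
  exact fun n => (key n).1

/-- parity of the trace polynomials -/
lemma tp_comp : ∀ n, (tracePoly n).comp (-X) = (-1) ^ n * tracePoly n := by
  have key : ∀ n, ((tracePoly n).comp (-X) = (-1) ^ n * tracePoly n) ∧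
      ((tracePoly (n + 1)).comp (-X) = (-1) ^ (n + 1) * tracePoly (n + 1)) := by
    intro n
    induction n with
    | zero =>
      constructor
      · simp [tp_zero]
      · simp [tp_one]
    | succ m ih =>
      refine ⟨ih.2, ?_⟩
      match m, ih with
      | 0, _ =>
        rw [tp_two]
        simp [sub_comp, pow_comp, X_comp]
      | (k + 1), ih =>
        have ihA : (tracePoly (k + 1)).comp (-X) = (-1) ^ (k + 1) * tracePoly (k + 1) := ih.1
        have ihB : (tracePoly (k + 2)).comp (-X) = (-1) ^ (k + 2) * tracePoly (k + 2) := by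
          have h := ih.2; rwa [show k + 1 + 1 = k + 2 by omega] at h
        rw [show k + 1 + 1 + 1 = k + 3 by omega, tp_rec, sub_comp, mul_comp, X_comp, ihA, ihB]
        ring
  exact fun n => (key n).1

/-- evaluation of the trace polynomials at `x + x⁻¹` -/
lemma tp_eval {x : ℂ} (hx : x ≠ 0) :
    ∀ n, (tracePoly (n + 1)).eval (x + x⁻¹) = x ^ (n + 1) + x⁻¹ ^ (n + 1) := by
  have hxy : x * x⁻¹ = 1 := mul_inv_cancel₀ hx
  have key : ∀ n, ((tracePoly (n + 1)).eval (x + x⁻¹) = x ^ (n + 1) + x⁻¹ ^ (n + 1)) ∧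
      ((tracePoly (n + 2)).eval (x + x⁻¹) = x ^ (n + 2) + x⁻¹ ^ (n + 2)) := by
    intro n
    induction n with
    | zero =>
      constructor
      · simp [tp_one]
      · rw [tp_two]; simp
        linear_combination 2 * hxy
    | succ m ih =>
      refine ⟨ih.2, ?_⟩
      rw [tp_rec, eval_sub, eval_mul, eval_X, ih.1, ih.2]
      linear_combination (x ^ (m + 1) + x⁻¹ ^ (m + 1)) * hxy
  exact fun n => (key n).1

/-- `A_s = Σ_{i=0}^{s} p_i` -/
noncomputable def Asum (s : ℕ) : Polynomial ℂ := ∑ i ∈ Finset.range (s + 1), tracePoly i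

/-- `S_s = Σ_{i=0}^{s} (-1)^i p_{s-i}` -/
noncomputable def Ssum (s : ℕ) : Polynomial ℂ :=
  ∑ i ∈ Finset.range (s + 1), (-1 : Polynomial ℂ) ^ i * tracePoly (s - i)

noncomputable def betaP (i : ℕ) : Polynomial ℂ := if Even i then 2 else X

noncomputable def Mpoly (s : ℕ) : Polynomial ℂ :=
  tracePoly s + ∑ i ∈ Finset.Icc 1 s, (-1 : Polynomial ℂ) ^ i * tracePoly (s - i) * betaP i

lemma betaP_add_two (i : ℕ) : betaP (i + 2) = betaP i := by
  simp [betaP, Nat.even_add]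

lemma Mrec (s : ℕ) : Mpoly (s + 3) = Mpoly (s + 1) := by
  unfold Mpoly
  rw [sum_Icc_one, sum_Icc_one,
    Finset.sum_range_succ' _ (s + 2), Finset.sum_range_succ' _ (s + 1)]
  have hterm : ∀ i, (-1 : Polynomial ℂ) ^ (i + 1 + 1 + 1) * tracePoly (s + 3 - (i + 1 + 1 + 1))
        * betaP (i + 1 + 1 + 1)
      = (-1 : Polynomial ℂ) ^ (i + 1) * tracePoly (s + 1 - (i + 1)) * betaP (i + 1) := by
    intro i
    have h1 : i + 1 + 1 + 1 = (i + 1) + 2 := by omega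
    have h2 : s + 3 - (i + 1 + 1 + 1) = s + 1 - (i + 1) := by omega
    rw [h1, h2, betaP_add_two, pow_add]
    ring
  rw [Finset.sum_congr rfl fun i _ => hterm i]
  have hb1 : betaP (0 + 1) = X := by simp [betaP]
  have hb2 : betaP (0 + 1 + 1) = 2 := by simp [betaP]
  rw [hb1, hb2, tp_rec]
  have h3 : s + 3 - (0 + 1) = s + 2 := by omega
  have h4 : s + 3 - (0 + 1 + 1) = s + 1 := by omega
  rw [h3, h4]
  ring

lemma Mzero : ∀ s, Mpoly (s + 1) = 0 := by
  have M1 : Mpoly 1 = 0 := by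
    unfold Mpoly
    rw [Finset.Icc_self, Finset.sum_singleton]
    simp [tp_one, tp_zero, betaP]
  have M2 : Mpoly 2 = 0 := by
    unfold Mpoly
    rw [sum_Icc_one, Finset.sum_range_succ, Finset.sum_range_one]
    simp [tp_one, tp_zero, tp_two, betaP]
    ring
  have key : ∀ n, Mpoly (n + 1) = 0 ∧ Mpoly (n + 2) = 0 := by
    intro n
    induction n with
    | zero => exact ⟨M1, M2⟩
    | succ m ih => exact ⟨ih.2, by rw [show m + 1 + 2 = m + 3 from rfl, Mrec]; exact ih.1⟩
  exact fun s => (key s).1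

lemma alpha_eq (i : ℕ) : alphaPoly i = (X ^ 2 - Zvar - 2) + C (betaP i) := by
  by_cases h : Even i <;> simp [alphaPoly, betaP, Zvar, h, map_ofNat] <;> ring

lemma Ssum_split (s : ℕ) :
    Ssum s = tracePoly s +
      ∑ i ∈ Finset.Icc 1 s, (-1 : Polynomial ℂ) ^ i * tracePoly (s - i) := by
  rw [Ssum, Finset.sum_range_succ' _ s, sum_Icc_one]
  simp [add_comm]

lemma fPoly_eq (s : ℕ) :
    fPoly s = (X ^ 2 - Zvar - 2) * C (Ssum s) + C (Mpoly s) := by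
  have hterm : ∀ i, (-1 : Polynomial (Polynomial ℂ)) ^ i * C (tracePoly (s - i)) * alphaPoly i
      = (X ^ 2 - Zvar - 2) * C ((-1) ^ i * tracePoly (s - i))
        + C ((-1) ^ i * tracePoly (s - i) * betaP i) := by
    intro i
    rw [alpha_eq]
    simp only [map_mul, map_pow, map_neg, map_one]
    ring
  rw [fPoly, Finset.sum_congr rfl fun i _ => hterm i, Finset.sum_add_distrib, ← Finset.mul_sum,
    ← map_sum, ← map_sum, Ssum_split, Mpoly]
  simp only [map_add]
  ring

/-- `A_s` is monic of degree `s`. -/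
lemma asum_monic (s : ℕ) : (Asum s).Monic ∧ (Asum s).natDegree = s := by
  have hA : Asum s = (∑ i ∈ Finset.range s, tracePoly i) + tracePoly s :=
    Finset.sum_range_succ _ _
  have hdegs : (tracePoly s).degree = (s : WithBot ℕ) := by
    rw [degree_eq_natDegree (tp_monic s).1.ne_zero, (tp_monic s).2]
  have hlt : (∑ i ∈ Finset.range s, tracePoly i).degree < (tracePoly s).degree := by
    rw [hdegs]
    refine lt_of_le_of_lt (degree_sum_le _ _) ?_
    rw [Finset.sup_lt_iff (by exact_mod_cast WithBot.bot_lt_coe s)]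
    intro i hi
    have : (tracePoly i).degree = (i : WithBot ℕ) := by
      rw [degree_eq_natDegree (tp_monic i).1.ne_zero, (tp_monic i).2]
    rw [this]
    exact_mod_cast Finset.mem_range.mp hi
  constructor
  · rw [hA]; exact (tp_monic s).1.add_of_right hlt
  · rw [hA, natDegree_add_eq_right_of_degree_lt hlt, (tp_monic s).2]

lemma asum_eval {x : ℂ} (hx : x ≠ 0) (s : ℕ) :
    (x - 1) * x ^ s * (Asum s).eval (x + x⁻¹) = x ^ (2 * s + 1) - 1 := by
  have hxy : x * x⁻¹ = 1 := mul_inv_cancel₀ hx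
  induction s with
  | zero => simp [Asum, tp_zero]
  | succ m ih =>
    have hpow : x ^ (m + 1) * x⁻¹ ^ (m + 1) = 1 := by rw [← mul_pow, hxy, one_pow]
    have hA : Asum (m + 1) = Asum m + tracePoly (m + 1) := Finset.sum_range_succ _ _
    rw [hA, eval_add, tp_eval hx m]
    linear_combination x * ih + (x - 1) * hpow

lemma divisors_three_le {s d : ℕ} (hd : d ∈ (2 * s + 1).divisors.erase 1) : 3 ≤ d := by
  rw [Finset.mem_erase, Nat.mem_divisors] at hd
  obtain ⟨h1, h2, _⟩ := hd
  have h0 : d ≠ 0 := by rintro rfl; simp at h2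
  have hne2 : d ≠ 2 := by
    rintro rfl
    obtain ⟨k, hk⟩ := h2
    omega
  omega

lemma totient_half_sum (s : ℕ) :
    ∑ d ∈ (2 * s + 1).divisors.erase 1, Nat.totient d / 2 = s := by
  have h1 : ∑ d ∈ (2 * s + 1).divisors, Nat.totient d = 2 * s + 1 := Nat.sum_totient _
  have hmem : (1 : ℕ) ∈ (2 * s + 1).divisors := Nat.one_mem_divisors.2 (by omega)
  rw [← Finset.insert_erase hmem, Finset.sum_insert (Finset.notMem_erase _ _),
    Nat.totient_one] at h1
  have h3 : ∀ d ∈ (2 * s + 1).divisors.erase 1, 2 * (Nat.totient d / 2) = Nat.totient d := by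
    intro d hd
    exact Nat.mul_div_cancel' (Nat.totient_even (by have := divisors_three_le hd; omega)).two_dvd
  have h4 : 2 * ∑ d ∈ (2 * s + 1).divisors.erase 1, Nat.totient d / 2
      = ∑ d ∈ (2 * s + 1).divisors.erase 1, Nat.totient d := by
    rw [Finset.mul_sum]
    exact Finset.sum_congr rfl h3
  omega

lemma prodq_eq (q : ℕ → Polynomial ℂ)
    (hq : ∀ d : ℕ, 3 ≤ d → ∀ x : ℂ, x ≠ 0 →
      (Polynomial.cyclotomic d ℂ).eval x = x ^ (Nat.totient d / 2) * (q d).eval (x + x⁻¹))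
    (s : ℕ) : ∏ d ∈ (2 * s + 1).divisors.erase 1, q d = Asum s := by
  apply Polynomial.eq_of_infinite_eval_eq
  refine Set.Infinite.mono ?_ ((Set.finite_singleton (2 : ℂ)).infinite_compl)
  intro z hz
  have hz2 : z ≠ 2 := hz
  -- find x with x + x⁻¹ = z
  obtain ⟨x, hxroot⟩ : ∃ x : ℂ, IsRoot (X ^ 2 - C z * X + C 1) x := by
    apply Complex.exists_root
    have : (X ^ 2 - C z * X + C 1 : Polynomial ℂ)
        = C 1 * X ^ 2 + C (-z) * X + C 1 := by ring_nf; simp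
    rw [this, degree_quadratic one_ne_zero]
    norm_num
  have hroot : x ^ 2 - z * x + 1 = 0 := by simpa using hxroot
  have hx : x ≠ 0 := by rintro rfl; simp at hroot
  have hxz : x + x⁻¹ = z := by field_simp; linear_combination hroot
  have hx1 : x ≠ 1 := by rintro rfl; apply hz2; linear_combination -hroot
  -- product of cyclotomics
  have hcyc : (x - 1) * ∏ d ∈ (2 * s + 1).divisors.erase 1, (cyclotomic d ℂ).eval x
      = x ^ (2 * s + 1) - 1 := by
    have hmem : (1 : ℕ) ∈ (2 * s + 1).divisors := Nat.one_mem_divisors.2 (by omega)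
    have h := Polynomial.prod_cyclotomic_eq_X_pow_sub_one (show 0 < 2 * s + 1 by omega) ℂ
    have he := congrArg (Polynomial.eval x) h
    rw [eval_prod, ← Finset.insert_erase hmem,
      Finset.prod_insert (Finset.notMem_erase _ _), cyclotomic_one] at he
    simpa using he
  have hqd : ∏ d ∈ (2 * s + 1).divisors.erase 1, (cyclotomic d ℂ).eval x
      = x ^ s * ∏ d ∈ (2 * s + 1).divisors.erase 1, (q d).eval z := by
    rw [Finset.prod_congr rfl fun d hd => by
      rw [hq d (divisors_three_le hd) x hx, hxz]]
    rw [Finset.prod_mul_distrib, Finset.prod_pow_eq_pow_sum, totient_half_sum]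
  have hAs := asum_eval hx s
  rw [hxz] at hAs
  have hkey : (x - 1) * x ^ s * ∏ d ∈ (2 * s + 1).divisors.erase 1, (q d).eval z
      = (x - 1) * x ^ s * (Asum s).eval z := by
    rw [hAs, mul_assoc, ← hqd, hcyc]
  have hne : (x - 1) * x ^ s ≠ 0 :=
    mul_ne_zero (sub_ne_zero.2 hx1) (pow_ne_zero _ hx)
  have := mul_left_cancel₀ hne hkey
  simpa [eval_prod] using this

lemma Ssum_eq_star (q : ℕ → Polynomial ℂ)
    (hq : ∀ d : ℕ, 3 ≤ d → ∀ x : ℂ, x ≠ 0 →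
      (Polynomial.cyclotomic d ℂ).eval x = x ^ (Nat.totient d / 2) * (q d).eval (x + x⁻¹))
    (s : ℕ) : Ssum s = ∏ d ∈ (2 * s + 1).divisors.erase 1, starPoly (q d) := by
  have hP := prodq_eq q hq s
  have hAne : Asum s ≠ 0 := (asum_monic s).1.ne_zero
  have hne : ∀ d ∈ (2 * s + 1).divisors.erase 1, q d ≠ 0 := by
    rw [← Finset.prod_ne_zero_iff, hP]; exact hAne
  have hdeg : ∑ d ∈ (2 * s + 1).divisors.erase 1, (q d).natDegree = s := by
    rw [← Polynomial.natDegree_prod _ _ hne, hP, (asum_monic s).2]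
  have hstar : ∏ d ∈ (2 * s + 1).divisors.erase 1, starPoly (q d)
      = (-1 : Polynomial ℂ) ^ s * (Asum s).comp (-X) := by
    unfold starPoly
    rw [Finset.prod_mul_distrib, Finset.prod_pow_eq_pow_sum, hdeg, ← Polynomial.prod_comp, hP]
  have hcompA : (Asum s).comp (-X)
      = ∑ i ∈ Finset.range (s + 1), (-1 : Polynomial ℂ) ^ i * tracePoly i := by
    rw [Asum]
    rw [show ((∑ i ∈ Finset.range (s + 1), tracePoly i).comp (-X))
        = ∑ i ∈ Finset.range (s + 1), (tracePoly i).comp (-X) from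
      map_sum (compRingHom (-X)) _ _]
    exact Finset.sum_congr rfl fun i _ => tp_comp i
  have hSsum : Ssum s
      = (-1 : Polynomial ℂ) ^ s * ∑ i ∈ Finset.range (s + 1), (-1 : Polynomial ℂ) ^ i * tracePoly i := by
    rw [Ssum, ← Finset.sum_range_reflect, Finset.mul_sum]
    refine Finset.sum_congr rfl fun j hj => ?_
    have hj' : j ≤ s := by
      have := Finset.mem_range.mp hj; omega
    have h1 : s + 1 - 1 - j = s - j := by omega
    have h2 : s - (s - j) = j := Nat.sub_sub_self hj'
    rw [h1, h2]
    have h3 : (-1 : Polynomial ℂ) ^ s = (-1) ^ (s - j) * (-1) ^ j := by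
      rw [← pow_add, Nat.sub_add_cancel hj']
    have h4 : ((-1 : Polynomial ℂ) ^ j) * (-1) ^ j = 1 := by
      rw [← pow_add]; exact Even.neg_one_pow ⟨j, rfl⟩
    rw [h3]
    linear_combination (-((-1 : Polynomial ℂ) ^ (s - j) * tracePoly j)) * h4
  rw [hstar, hcompA, hSsum]

theorem stmt19 (q : ℕ → Polynomial ℂ) (hq1 : q 1 = X - 2) (hq2 : q 2 = X + 2)
    (hq : ∀ d : ℕ, 3 ≤ d → ∀ x : ℂ, x ≠ 0 →
      (Polynomial.cyclotomic d ℂ).eval x = x ^ (Nat.totient d / 2) * (q d).eval (x + x⁻¹))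
    (s : ℕ) (hs : 1 ≤ s) :
    fPoly s = (X ^ 2 - Zvar - 2) *
        C (∑ i ∈ Finset.range (s + 1), (-1 : Polynomial ℂ) ^ i * tracePoly (s - i)) ∧
      fPoly s = (X ^ 2 - Zvar - 2) *
        C (∏ d ∈ (2 * s + 1).divisors.erase 1, starPoly (q d)) := by
  have hM : Mpoly s = 0 := by
    obtain ⟨m, rfl⟩ := Nat.exists_eq_add_of_le hs
    rw [show 1 + m = m + 1 by omega]
    exact Mzero m
  have h1 : fPoly s = (X ^ 2 - Zvar - 2) * C (Ssum s) := by
    rw [fPoly_eq, hM, map_zero, add_zero]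
  refine ⟨h1, ?_⟩
  rw [h1, Ssum_eq_star q hq s]
end
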